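/- Let d ≥ 1 and C_d = [0,1]^d. Every two-point design Z = {z_1, z_2} ⊆ C_d satisfies CR(Z) ≥ (1/2)·√(d − 3/4), and this bound is attained: the design Z* = {z*_1, 1_d − z*_1} with z*_1 = (1/2, …, 1/2, 1/4) satisfies CR(Z*) = (1/2)·√(d − 3/4). Moreover, any two-point design containing the center 1_d/2 of C_d has covering radius exactly √d/2. -/

import Mathlib

open Metric

/-- The unit hypercube `[0,1]^d` in `ℝ^d`. -/
def unitCube (d : ℕ) : Set (EuclideanSpace ℝ (Fin d)) :=
  {x | ∀ i, x i ∈ Set.Icc (0 : ℝ) 1}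

/-- The covering radius `CR(A) = sup_{x∈X} d(x,A)` of a design `A` in the domain `X`. -/
noncomputable def covRad {d : ℕ} (X A : Set (EuclideanSpace ℝ (Fin d))) : ℝ :=
  sSup ((fun x => infDist x A) '' X)

/-- The center `1_d/2` of the unit hypercube. -/
noncomputable def cubeCenter (d : ℕ) : EuclideanSpace ℝ (Fin d) :=
  (WithLp.equiv 2 (Fin d → ℝ)).symm (fun _ => 1 / 2)

/-- The point `z*_1 = (1/2, …, 1/2, 1/4)` (all coordinates `1/2` except the last one,
which equals `1/4`). -/
noncomputable def zStar (d : ℕ) : EuclideanSpace ℝ (Fin d) :=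
  (WithLp.equiv 2 (Fin d → ℝ)).symm (fun i => if (i : ℕ) = d - 1 then 1 / 4 else 1 / 2)

/-- The point `1_d − z`. -/
noncomputable def onesSub {d : ℕ} (z : EuclideanSpace ℝ (Fin d)) :
    EuclideanSpace ℝ (Fin d) :=
  (WithLp.equiv 2 (Fin d → ℝ)).symm (fun i => 1 - z i)

/-!
Write `u = |z₁ᵢ - 1/2|` and `v = |z₂ᵢ - 1/2|`. In a coordinate where `z₁` and `z₂` lie on the
same side of `1/2`, the opposite face of the cube is at distance `≥ 1/2` from both. In a coordinate
where they are split, `xᵢ` may go to the face away from `z₁` (the squared distances exceed `1/4`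
by `u + u²` and `v² - v`), to the face away from `z₂`, or to `1/2` (excesses `u² - 1/4`,
`v² - 1/4`). Serving the two sides alternately, each time with the largest remaining gain, keeps
one total excess nonnegative and the other above `-max (v - v²)`; a case analysis on the coordinate
with the largest `u` then keeps both above `-3/16`, so some point of the cube is at squared
distance `≥ d/4 - 3/16` from both `z₁` and `z₂`. The design `{z*, 1 - z*}` attains this: every
point of the cube is that close to whichever of the two lies on its side of the hyperplane
`x_d = 1/2`.
-/

/-- The excesses `f`, `g` of `(xᵢ - z₁ᵢ)²` and `(xᵢ - z₂ᵢ)²` over `1/4` for the three choices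
`xᵢ ∈ {0, 1/2, 1}` in a coordinate where `z₁ᵢ`, `z₂ᵢ` lie on opposite sides of `1/2`, at distances
`u`, `v` from it. -/
def IsSplitGain (u v f g : ℝ) : Prop :=
  (f = u + u ^ 2 ∧ g = v ^ 2 - v) ∨ (f = u ^ 2 - u ∧ g = v + v ^ 2) ∨
    (f = u ^ 2 - 1 / 4 ∧ g = v ^ 2 - 1 / 4)

namespace IsSplitGain

variable {u v : ℝ}

theorem symm {f g : ℝ} (h : IsSplitGain u v f g) : IsSplitGain v u g f := by
  rcases h with h | h | h <;> simp only [IsSplitGain, h, and_true, true_or, or_true]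

theorem awayFst : IsSplitGain u v (u + u ^ 2) (v ^ 2 - v) := Or.inl ⟨rfl, rfl⟩

theorem awaySnd : IsSplitGain u v (u ^ 2 - u) (v + v ^ 2) := Or.inr (Or.inl ⟨rfl, rfl⟩)

theorem center : IsSplitGain u v (u ^ 2 - 1 / 4) (v ^ 2 - 1 / 4) := Or.inr (Or.inr ⟨rfl, rfl⟩)

end IsSplitGain

def HasSplitGains {ι : Type*} (S : Finset ι) (u v : ι → ℝ) (α β : ℝ) : Prop :=
  ∃ f g : ι → ℝ, (∀ i ∈ S, IsSplitGain (u i) (v i) (f i) (g i)) ∧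
    α ≤ ∑ i ∈ S, f i ∧ β ≤ ∑ i ∈ S, g i

namespace HasSplitGains

variable {ι : Type*} {S : Finset ι} {u v : ι → ℝ} {α β : ℝ}

theorem empty (u v : ι → ℝ) : HasSplitGains ∅ u v 0 0 :=
  ⟨0, 0, by simp, by simp, by simp⟩

theorem mono {α' β' : ℝ} (h : HasSplitGains S u v α β) (hα : α' ≤ α) (hβ : β' ≤ β) :
    HasSplitGains S u v α' β' :=
  let ⟨f, g, hfg, hf, hg⟩ := h
  ⟨f, g, hfg, hα.trans hf, hβ.trans hg⟩

theorem swap (h : HasSplitGains S u v α β) : HasSplitGains S v u β α :=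
  let ⟨f, g, hfg, hf, hg⟩ := h
  ⟨g, f, fun i hi => (hfg i hi).symm, hg, hf⟩

theorem of_erase [DecidableEq ι] {m : ι} {a b : ℝ} (hm : m ∈ S)
    (hab : IsSplitGain (u m) (v m) a b) (h : HasSplitGains (S.erase m) u v α β) :
    HasSplitGains S u v (a + α) (b + β) := by
  obtain ⟨f, g, hfg, hf, hg⟩ := h
  refine ⟨Function.update f m a, Function.update g m b, fun i hi => ?_, ?_, ?_⟩
  · rcases eq_or_ne i m with rfl | him
    · simpa using hab
    · simpa [him] using hfg i (Finset.mem_erase.2 ⟨him, hi⟩)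
  · rw [Finset.sum_update_of_mem hm, Finset.sdiff_singleton_eq_erase]
    linarith
  · rw [Finset.sum_update_of_mem hm, Finset.sdiff_singleton_eq_erase]
    linarith

end HasSplitGains

open HasSplitGains

theorem hasSplitGains_balanced {ι : Type*} [DecidableEq ι] (S : Finset ι) (u v : ι → ℝ)
    (hu : ∀ i ∈ S, 0 ≤ u i) (hv : ∀ i ∈ S, 0 ≤ v i) (c : ℝ) (hc : 0 ≤ c)
    (hvc : ∀ i ∈ S, v i - v i ^ 2 ≤ c) : HasSplitGains S u v 0 (-c) := by
  induction S using Finset.strongInduction generalizing u v c with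
  | H S ih =>
    rcases S.eq_empty_or_nonempty with rfl | hS
    · exact (empty u v).mono le_rfl (by linarith)
    obtain ⟨m, hm, hmax⟩ := S.exists_max_image u hS
    have hrest := ih (S.erase m) (Finset.erase_ssubset hm) v u
      (fun i hi => hv i (Finset.mem_of_mem_erase hi))
      (fun i hi => hu i (Finset.mem_of_mem_erase hi))
      (u m) (hu m hm) fun i hi => by nlinarith [hmax i (Finset.mem_of_mem_erase hi)]
    refine (hrest.swap.of_erase hm IsSplitGain.awayFst).mono ?_ ?_
    · nlinarith
    · linarith [hvc m hm]

theorem hasSplitGains_of_pair {ι : Type*} [DecidableEq ι] {S : Finset ι} {u v : ι → ℝ}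
    (hu : ∀ i ∈ S, 0 ≤ u i) (hv : ∀ i ∈ S, 0 ≤ v i) {m j : ι} (hm : m ∈ S)
    (hj : j ∈ S.erase m) (hum : 1 / 4 < u m) :
    HasSplitGains S u v (-(3 / 16)) (v m ^ 2 - v m + (v j + v j ^ 2)) := by
  have hsub : (S.erase m).erase j ⊆ S :=
    (Finset.erase_subset _ _).trans (Finset.erase_subset _ _)
  have hrest := hasSplitGains_balanced ((S.erase m).erase j) v u (fun i hi => hv i (hsub hi))
    (fun i hi => hu i (hsub hi)) (1 / 4) (by norm_num)
    fun i _ => by nlinarith [sq_nonneg (u i - 1 / 2)]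
  refine ((hrest.swap.of_erase hj IsSplitGain.awaySnd).of_erase hm IsSplitGain.awayFst).mono
    ?_ (by linarith)
  nlinarith [sq_nonneg (u j - 1 / 2)]

theorem hasSplitGains_three_sixteenths {ι : Type*} [DecidableEq ι] (S : Finset ι) (u v : ι → ℝ)
    (hu : ∀ i ∈ S, 0 ≤ u i ∧ u i ≤ 1 / 2) (hv : ∀ i ∈ S, 0 ≤ v i ∧ v i ≤ 1 / 2) :
    HasSplitGains S u v (-(3 / 16)) (-(3 / 16)) := by
  rcases S.eq_empty_or_nonempty with rfl | hS
  · exact (empty u v).mono (by norm_num) (by norm_num)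
  obtain ⟨m, hm, hmax⟩ := S.exists_max_image u hS
  have hu₀ i (hi : i ∈ S) := (hu i hi).1
  have hv₀ i (hi : i ∈ S) := (hv i hi).1
  have hu' i (hi : i ∈ S.erase m) := hu₀ i (Finset.mem_of_mem_erase hi)
  have hv' i (hi : i ∈ S.erase m) := hv₀ i (Finset.mem_of_mem_erase hi)
  have hum₂ := (hu m hm).2
  by_cases hvm : v m ≤ 1 / 4
  · have hrest := hasSplitGains_balanced (S.erase m) v u hv' hu' (u m) (hu₀ m hm)
      fun i hi => by nlinarith [hmax i (Finset.mem_of_mem_erase hi)]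
    exact (hrest.swap.of_erase hm IsSplitGain.awayFst).mono (by nlinarith)
      (by nlinarith [hv₀ m hm])
  by_cases hum : u m ≤ 1 / 4
  · have hrest := hasSplitGains_balanced (S.erase m) u v hu' hv' (1 / 4) (by norm_num)
      fun i _ => by nlinarith [sq_nonneg (v i - 1 / 2)]
    exact (hrest.of_erase hm IsSplitGain.awaySnd).mono (by nlinarith [hu₀ m hm]) (by nlinarith)
  push Not at hvm hum
  by_cases hpairv : ∃ j ∈ S.erase m, v m - v m ^ 2 - 3 / 16 ≤ v j + v j ^ 2
  · obtain ⟨j, hj, hvj⟩ := hpairv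
    exact (hasSplitGains_of_pair hu₀ hv₀ hm hj hum).mono le_rfl (by linarith)
  by_cases hpairu : ∃ j ∈ S.erase m, u m - u m ^ 2 - 3 / 16 ≤ u j + u j ^ 2
  · obtain ⟨j, hj, huj⟩ := hpairu
    exact (hasSplitGains_of_pair hv₀ hu₀ hm hj hvm).swap.mono (by linarith) le_rfl
  push Not at hpairu
  -- no partner can compensate `m` on either side, so `x` is put at the centre in coordinate `m`
  have hrest := hasSplitGains_balanced (S.erase m) v u hv' hu' (u m - u m ^ 2 - 3 / 16)
    (by nlinarith) fun i hi => by nlinarith [hpairu i hi]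
  exact (hrest.swap.of_erase hm IsSplitGain.center).mono
    (by nlinarith [sq_nonneg (u m - 1 / 4)]) (by nlinarith)

theorem exists_mem_Icc_of_isSplitGain_of_eq {a b u v f g : ℝ} (ha : a = 1 / 2 - u)
    (hb : b = 1 / 2 + v) (hfg : IsSplitGain u v f g) :
    ∃ t ∈ Set.Icc (0 : ℝ) 1, 1 / 4 + f ≤ (t - a) ^ 2 ∧ 1 / 4 + g ≤ (t - b) ^ 2 := by
  subst ha hb
  rcases hfg with ⟨rfl, rfl⟩ | ⟨rfl, rfl⟩ | ⟨rfl, rfl⟩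
  · exact ⟨1, by norm_num, le_of_eq (by ring), le_of_eq (by ring)⟩
  · exact ⟨0, by norm_num, le_of_eq (by ring), le_of_eq (by ring)⟩
  · exact ⟨1 / 2, by norm_num, le_of_eq (by ring), le_of_eq (by ring)⟩

theorem exists_mem_Icc_of_isSplitGain {a b f g : ℝ} (hab : (a - 1 / 2) * (b - 1 / 2) < 0)
    (hfg : IsSplitGain |a - 1 / 2| |b - 1 / 2| f g) :
    ∃ t ∈ Set.Icc (0 : ℝ) 1, 1 / 4 + f ≤ (t - a) ^ 2 ∧ 1 / 4 + g ≤ (t - b) ^ 2 := by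
  rcases mul_neg_iff.1 hab with ⟨ha, hb⟩ | ⟨ha, hb⟩
  · rw [abs_of_pos ha, abs_of_neg hb] at hfg
    obtain ⟨t, ht, h₁, h₂⟩ := exists_mem_Icc_of_isSplitGain_of_eq (a := 1 - a) (b := 1 - b)
      (by ring) (by ring) hfg
    exact ⟨1 - t, ⟨by linarith [ht.2], by linarith [ht.1]⟩, by linarith, by linarith⟩
  · rw [abs_of_neg ha, abs_of_pos hb] at hfg
    exact exists_mem_Icc_of_isSplitGain_of_eq (by ring) (by ring) hfg

theorem exists_mem_Icc_quarter_le {a b : ℝ} (hab : 0 ≤ (a - 1 / 2) * (b - 1 / 2)) :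
    ∃ t ∈ Set.Icc (0 : ℝ) 1, 1 / 4 ≤ (t - a) ^ 2 ∧ 1 / 4 ≤ (t - b) ^ 2 := by
  rcases mul_nonneg_iff.1 hab with ⟨ha, hb⟩ | ⟨ha, hb⟩
  · exact ⟨0, by norm_num, by nlinarith, by nlinarith⟩
  · exact ⟨1, by norm_num, by nlinarith, by nlinarith⟩

theorem EuclideanSpace.real_dist_sq_eq {n : Type*} [Fintype n] (x y : EuclideanSpace ℝ n) :
    dist x y ^ 2 = ∑ i, (x i - y i) ^ 2 := by
  simp [EuclideanSpace.dist_sq_eq, Real.dist_eq, sq_abs]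

theorem sqrt_div_two_eq (s : ℝ) : √s / 2 = √(s / 4) := by
  rw [Real.sqrt_div' s (by norm_num), show (4 : ℝ) = 2 ^ 2 by norm_num, Real.sqrt_sq (by norm_num)]

theorem sqrt_div_two_le_dist {α : Type*} [PseudoMetricSpace α] {x y : α} {s : ℝ}
    (h : s / 4 ≤ dist x y ^ 2) : √s / 2 ≤ dist x y := by
  rwa [sqrt_div_two_eq, Real.sqrt_le_left dist_nonneg]

theorem dist_le_sqrt_div_two {α : Type*} [PseudoMetricSpace α] {x y : α} {s : ℝ}
    (h : dist x y ^ 2 ≤ s / 4) : dist x y ≤ √s / 2 := by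
  rw [sqrt_div_two_eq]
  exact Real.le_sqrt_of_sq_le h

theorem Fin.sum_ite_val_eq_sub_one {d : ℕ} (hd : 1 ≤ d) (a b : ℝ) :
    ∑ i : Fin d, (if (i : ℕ) = d - 1 then a else b) = a + (d - 1) * b := by
  obtain ⟨n, rfl⟩ : ∃ n, d = n + 1 := ⟨d - 1, by omega⟩
  rw [Fin.sum_univ_castSucc]
  simp [Fin.val_castSucc, Fin.is_lt, ne_of_lt]
  ring

section

variable {d : ℕ}

theorem exists_mem_unitCube_of_forall_coord {z₁ z₂ : EuclideanSpace ℝ (Fin d)}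
    {f g : Fin d → ℝ}
    (h : ∀ i, ∃ t ∈ Set.Icc (0 : ℝ) 1,
      1 / 4 + f i ≤ (t - z₁ i) ^ 2 ∧ 1 / 4 + g i ≤ (t - z₂ i) ^ 2) :
    ∃ x ∈ unitCube d, d / 4 + ∑ i, f i ≤ dist x z₁ ^ 2 ∧ d / 4 + ∑ i, g i ≤ dist x z₂ ^ 2 := by
  choose t ht h₁ h₂ using h
  have hsum (k : Fin d → ℝ) : (d / 4 : ℝ) + ∑ i, k i = ∑ i, (1 / 4 + k i) := by
    simp [Finset.sum_add_distrib]; ring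
  refine ⟨WithLp.toLp 2 t, ht, ?_, ?_⟩ <;>
    rw [EuclideanSpace.real_dist_sq_eq, hsum] <;> refine Finset.sum_le_sum fun i _ => ?_
  exacts [h₁ i, h₂ i]

theorem exists_mem_unitCube_dist_sq_ge {z₁ z₂ : EuclideanSpace ℝ (Fin d)}
    (hz₁ : z₁ ∈ unitCube d) (hz₂ : z₂ ∈ unitCube d) :
    ∃ x ∈ unitCube d, d / 4 - 3 / 16 ≤ dist x z₁ ^ 2 ∧ d / 4 - 3 / 16 ≤ dist x z₂ ^ 2 := by
  classical
  set S := Finset.univ.filter fun i => (z₁ i - 1 / 2) * (z₂ i - 1 / 2) < 0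
  have habs {z : EuclideanSpace ℝ (Fin d)} (hz : z ∈ unitCube d) (i : Fin d) :
      0 ≤ |z i - 1 / 2| ∧ |z i - 1 / 2| ≤ 1 / 2 :=
    ⟨abs_nonneg _, abs_le.2 ⟨by linarith [(hz i).1], by linarith [(hz i).2]⟩⟩
  obtain ⟨f, g, hfg, hf, hg⟩ := hasSplitGains_three_sixteenths S (fun i => |z₁ i - 1 / 2|)
    (fun i => |z₂ i - 1 / 2|) (fun i _ => habs hz₁ i) (fun i _ => habs hz₂ i)
  obtain ⟨x, hx, h₁, h₂⟩ := exists_mem_unitCube_of_forall_coord (z₁ := z₁) (z₂ := z₂)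
    (f := fun i => if i ∈ S then f i else 0) (g := fun i => if i ∈ S then g i else 0) fun i => by
      by_cases hi : i ∈ S
      · simpa [hi] using exists_mem_Icc_of_isSplitGain (Finset.mem_filter.1 hi).2 (hfg i hi)
      · simpa [hi] using exists_mem_Icc_quarter_le
          (not_lt.1 fun h => hi (Finset.mem_filter.2 ⟨Finset.mem_univ i, h⟩))
  simp only [Finset.sum_ite_mem, Finset.univ_inter] at h₁ h₂
  exact ⟨x, hx, by linarith, by linarith⟩

theorem le_covRad {X A : Set (EuclideanSpace ℝ (Fin d))} (hX : Bornology.IsBounded X)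
    {x : EuclideanSpace ℝ (Fin d)} (hx : x ∈ X) : infDist x A ≤ covRad X A :=
  le_csSup ((lipschitz_infDist_pt A).isBounded_image hX).bddAbove ⟨x, hx, rfl⟩

theorem covRad_le {X A : Set (EuclideanSpace ℝ (Fin d))} (hX : X.Nonempty) {r : ℝ}
    (h : ∀ x ∈ X, infDist x A ≤ r) : covRad X A ≤ r :=
  csSup_le (hX.image _) (Set.forall_mem_image.2 h)

theorem le_covRad_pair {X : Set (EuclideanSpace ℝ (Fin d))} (hX : Bornology.IsBounded X)
    {x z₁ z₂ : EuclideanSpace ℝ (Fin d)} (hx : x ∈ X) {r : ℝ} (h₁ : r ≤ dist x z₁)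
    (h₂ : r ≤ dist x z₂) : r ≤ covRad X {z₁, z₂} := by
  refine le_trans ?_ (le_covRad hX hx)
  rw [le_infDist (Set.insert_nonempty _ _)]
  simp [h₁, h₂]

theorem covRad_pair_le {X : Set (EuclideanSpace ℝ (Fin d))} (hX : X.Nonempty)
    {z₁ z₂ : EuclideanSpace ℝ (Fin d)} {r : ℝ} (h : ∀ x ∈ X, dist x z₁ ≤ r ∨ dist x z₂ ≤ r) :
    covRad X {z₁, z₂} ≤ r :=
  covRad_le hX fun x hx => (h x hx).elim
    (fun h₁ => (infDist_le_dist_of_mem (by simp)).trans h₁)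
    (fun h₂ => (infDist_le_dist_of_mem (by simp)).trans h₂)

@[simp]
theorem cubeCenter_apply (i : Fin d) : cubeCenter d i = 1 / 2 := rfl

@[simp]
theorem onesSub_apply (z : EuclideanSpace ℝ (Fin d)) (i : Fin d) : onesSub z i = 1 - z i := rfl

theorem zStar_apply (i : Fin d) : zStar d i = if (i : ℕ) = d - 1 then 1 / 4 else 1 / 2 := rfl

theorem cubeCenter_mem_unitCube : cubeCenter d ∈ unitCube d := fun i => by norm_num

theorem onesSub_mem_unitCube {z : EuclideanSpace ℝ (Fin d)} (hz : z ∈ unitCube d) :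
    onesSub z ∈ unitCube d := fun i => by
  simp only [onesSub_apply, Set.mem_Icc]
  constructor <;> linarith [(hz i).1, (hz i).2]

@[simp]
theorem onesSub_onesSub (z : EuclideanSpace ℝ (Fin d)) : onesSub (onesSub z) = z := by
  ext i
  simp

theorem dist_onesSub_onesSub (x y : EuclideanSpace ℝ (Fin d)) :
    dist (onesSub x) (onesSub y) = dist x y := by
  simp only [EuclideanSpace.dist_eq, onesSub_apply, dist_sub_left]

theorem dist_cubeCenter_sq_le {x : EuclideanSpace ℝ (Fin d)} (hx : x ∈ unitCube d) :
    dist x (cubeCenter d) ^ 2 ≤ d / 4 := by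
  rw [EuclideanSpace.real_dist_sq_eq]
  calc ∑ i, (x i - cubeCenter d i) ^ 2 ≤ ∑ _i : Fin d, (1 / 4 : ℝ) :=
        Finset.sum_le_sum fun i _ => by rw [cubeCenter_apply]; nlinarith [(hx i).1, (hx i).2]
    _ = d / 4 := by simp; ring

theorem isBounded_unitCube : Bornology.IsBounded (unitCube d) :=
  isBounded_closedBall.subset fun _ hx =>
    mem_closedBall.2 (dist_le_sqrt_div_two (dist_cubeCenter_sq_le hx))

theorem dist_zStar_sq_le (hd : 1 ≤ d) {x : EuclideanSpace ℝ (Fin d)} (hx : x ∈ unitCube d)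
    (hlast : ∀ i : Fin d, (i : ℕ) = d - 1 → x i ≤ 1 / 2) :
    dist x (zStar d) ^ 2 ≤ d / 4 - 3 / 16 := by
  rw [EuclideanSpace.real_dist_sq_eq]
  calc ∑ i, (x i - zStar d i) ^ 2 ≤ ∑ i : Fin d, (if (i : ℕ) = d - 1 then 1 / 16 else 1 / 4) :=
        Finset.sum_le_sum fun i _ => by
          rw [zStar_apply]
          split_ifs with hi
          · nlinarith [(hx i).1, hlast i hi]
          · nlinarith [(hx i).1, (hx i).2]
    _ = d / 4 - 3 / 16 := by rw [Fin.sum_ite_val_eq_sub_one hd]; ring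

theorem covRad_zStar_onesSub (hd : 1 ≤ d) :
    covRad (unitCube d) {zStar d, onesSub (zStar d)} = √((d : ℝ) - 3 / 4) / 2 := by
  apply le_antisymm
  · refine covRad_pair_le ⟨_, cubeCenter_mem_unitCube⟩ fun x hx => ?_
    by_cases hlast : ∀ i : Fin d, (i : ℕ) = d - 1 → x i ≤ 1 / 2
    · exact Or.inl (dist_le_sqrt_div_two (by linarith [dist_zStar_sq_le hd hx hlast]))
    · push Not at hlast
      obtain ⟨j, hj, hxj⟩ := hlast
      have hlast' : ∀ i : Fin d, (i : ℕ) = d - 1 → onesSub x i ≤ 1 / 2 := fun i hi => by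
        rw [onesSub_apply, Fin.ext (hi.trans hj.symm)]; linarith
      refine Or.inr (dist_le_sqrt_div_two ?_)
      rw [← onesSub_onesSub x, dist_onesSub_onesSub]
      linarith [dist_zStar_sq_le hd (onesSub_mem_unitCube hx) hlast']
  · have h0 : (0 : EuclideanSpace ℝ (Fin d)) ∈ unitCube d := fun i => by simp
    refine le_covRad_pair isBounded_unitCube h0 (sqrt_div_two_le_dist ?_)
      (sqrt_div_two_le_dist ?_) <;>
    simp only [EuclideanSpace.real_dist_sq_eq, zStar_apply, onesSub_apply, PiLp.zero_apply,
      apply_ite (fun t : ℝ => (0 - t) ^ 2), apply_ite (fun t : ℝ => (0 - (1 - t)) ^ 2),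
      Fin.sum_ite_val_eq_sub_one hd] <;>
    linarith

theorem covRad_cubeCenter_pair (z : EuclideanSpace ℝ (Fin d)) :
    covRad (unitCube d) {cubeCenter d, z} = √(d : ℝ) / 2 := by
  apply le_antisymm
  · exact covRad_pair_le ⟨_, cubeCenter_mem_unitCube⟩ fun x hx =>
      Or.inl (dist_le_sqrt_div_two (dist_cubeCenter_sq_le hx))
  · obtain ⟨x, hx, h₁, h₂⟩ := exists_mem_unitCube_of_forall_coord (z₁ := cubeCenter d) (z₂ := z)
      (f := 0) (g := 0) fun i => by
        simpa using exists_mem_Icc_quarter_le (a := 1 / 2) (b := z i) (by simp)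
    simp only [Pi.zero_apply, Finset.sum_const_zero, add_zero] at h₁ h₂
    exact le_covRad_pair isBounded_unitCube hx (sqrt_div_two_le_dist h₁) (sqrt_div_two_le_dist h₂)

theorem le_covRad_of_card_eq_two {Z : Finset (EuclideanSpace ℝ (Fin d))} (hZ : ↑Z ⊆ unitCube d)
    (hcard : Z.card = 2) : √((d : ℝ) - 3 / 4) / 2 ≤ covRad (unitCube d) Z := by
  obtain ⟨z₁, z₂, -, rfl⟩ := Finset.card_eq_two.1 hcard
  rw [Finset.coe_pair] at hZ ⊢
  obtain ⟨x, hx, h₁, h₂⟩ :=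
    exists_mem_unitCube_dist_sq_ge (hZ (Set.mem_insert _ _))
      (hZ (Set.mem_insert_of_mem _ (Set.mem_singleton _)))
  exact le_covRad_pair isBounded_unitCube hx (sqrt_div_two_le_dist (by linarith))
    (sqrt_div_two_le_dist (by linarith))

end

/-- **Two-point `CR`-optimal designs in the hypercube.**  Every two-point design in
`[0,1]^d` has covering radius at least `(1/2)√(d − 3/4)`; the design
`{z*_1, 1_d − z*_1}` with `z*_1 = (1/2,…,1/2,1/4)` attains this bound; and any two-point
design containing the center `1_d/2` has covering radius exactly `√d/2`. -/
theorem two_point_covRad_optimal_cube (d : ℕ) (hd : 1 ≤ d) :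
    (∀ Z : Finset (EuclideanSpace ℝ (Fin d)), ↑Z ⊆ unitCube d → Z.card = 2 →
      Real.sqrt ((d : ℝ) - 3 / 4) / 2 ≤
        covRad (unitCube d) (Z : Set (EuclideanSpace ℝ (Fin d)))) ∧
    covRad (unitCube d) {zStar d, onesSub (zStar d)} =
      Real.sqrt ((d : ℝ) - 3 / 4) / 2 ∧
    (∀ z ∈ unitCube d, covRad (unitCube d) {cubeCenter d, z} = Real.sqrt d / 2) :=
  ⟨fun _ hZ hcard => le_covRad_of_card_eq_two hZ hcard, covRad_zStar_onesSub hd,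
    fun z _ => covRad_cubeCenter_pair z⟩
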